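/- arXiv:2512.24061 — 4 statements merged into one kernel-verified Lean document; each statement's English description precedes it below -/
import Mathlib

section
/- A finite set S of points in the plane in general position (no three collinear) is in convex position if and only if every 4-point subset of S is in convex position. -/
def GenPos (S : Set (ℝ × ℝ)) : Prop :=
  ∀ a ∈ S, ∀ b ∈ S, ∀ c ∈ S, a ≠ b → a ≠ c → b ≠ c →
    ¬ Collinear ℝ ({a, b, c} : Set (ℝ × ℝ))

def ConvexPos (S : Set (ℝ × ℝ)) : Prop :=
  ∀ p ∈ S, p ∉ convexHull ℝ (S \ {p})

noncomputable def det2 (a b c : ℝ × ℝ) : ℝ :=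
  (b.1 - a.1) * (c.2 - a.2) - (b.2 - a.2) * (c.1 - a.1)

noncomputable def chi (a b c : ℝ × ℝ) : ℝ := Real.sign (det2 a b c)

theorem stmt_0 (S : Set (ℝ × ℝ)) (hfin : S.Finite) (hgp : GenPos S) :
    ConvexPos S ↔ ∀ Q ⊆ S, Q.ncard = 4 → ConvexPos Q := by
  constructor
  · intro h Q hQ _ p hp hcon
    exact h p (hQ hp) (convexHull_mono (Set.diff_subset_diff_left hQ) hcon)
  · intro h p hpS hcon
    rw [convexHull_eq_union] at hcon
    simp only [Set.mem_iUnion] at hcon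
    obtain ⟨t, hts, hai, hpt⟩ := hcon
    have hcard : t.card ≤ 3 := by
      have := hai.card_le_finrank_succ
      have h2 : Module.finrank ℝ (vectorSpan ℝ (Set.range ((↑) : t → ℝ × ℝ))) ≤ 2 := by
        have := Submodule.finrank_le (vectorSpan ℝ (Set.range ((↑) : t → ℝ × ℝ)))
        simpa using this
      simp only [Fintype.card_coe] at this
      omega
    interval_cases hc : t.card
    · rw [Finset.card_eq_zero] at hc; subst hc; simp at hpt
    · rw [Finset.card_eq_one] at hc
      obtain ⟨a, rfl⟩ := hc
      simp only [Finset.coe_singleton, convexHull_singleton, Set.mem_singleton_iff] at hpt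
      subst hpt
      exact (hts (by simp)).2 rfl
    · rw [Finset.card_eq_two] at hc
      obtain ⟨a, b, hab, rfl⟩ := hc
      have ha := hts (by simp : a ∈ ({a, b} : Finset _))
      have hb := hts (by simp : b ∈ ({a, b} : Finset _))
      rw [Finset.coe_insert, Finset.coe_singleton, convexHull_pair,
        mem_segment_iff_wbtw] at hpt
      exact hgp a ha.1 p hpS b hb.1
        (fun e => ha.2 e) hab (fun e => hb.2 e.symm) hpt.collinear
    · rw [Finset.card_eq_three] at hc
      obtain ⟨a, b, c, hab, hac, hbc, rfl⟩ := hc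
      have hsub : ({a, b, c} : Set (ℝ × ℝ)) ⊆ S \ {p} := by
        intro x hx; exact hts (by simpa using hx)
      have hpa : p ∉ ({a, b, c} : Set (ℝ × ℝ)) := by
        rintro (rfl | rfl | rfl)
        · exact (hsub (by simp)).2 rfl
        · exact (hsub (by simp)).2 rfl
        · exact (hsub (by simp)).2 rfl
      have hQS : ({p, a, b, c} : Set (ℝ × ℝ)) ⊆ S := by
        rintro x (rfl | rfl | rfl | rfl)
        · exact hpS
        · exact (hsub (by simp)).1
        · exact (hsub (by simp)).1
        · exact (hsub (by simp)).1
      have hQ4 : ({p, a, b, c} : Set (ℝ × ℝ)).ncard = 4 := by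
        rw [Set.ncard_insert_of_notMem hpa (by simp [Set.Finite.insert]),
          Set.ncard_insert_of_notMem (by simp [hab, hac]) (by simp [Set.Finite.insert]),
          Set.ncard_insert_of_notMem (by simp [hbc]) (by simp),
          Set.ncard_singleton]
      refine h {p, a, b, c} hQS hQ4 p (by simp) ?_
      have : ({p, a, b, c} : Set (ℝ × ℝ)) \ {p} = {a, b, c} := by
        exact Set.insert_diff_self_of_notMem hpa
      rw [this]
      simpa using hpt
end

section
/- Let p1, p2, p3, p4, p5 be five distinct points in the plane with no three collinear, and let χ denote the orientation sign. If χ(p1,p2,p3) = χ(p1,p2,p4) = χ(p1,p2,p5) = χ(p1,p3,p4) = χ(p1,p4,p5) = +1, then χ(p1,p3,p5) = +1. -/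
lemma sign_one_pos {x : ℝ} (h : Real.sign x = 1) : 0 < x := by
  rcases lt_trichotomy x 0 with hx | hx | hx
  · rw [Real.sign_of_neg hx] at h; norm_num at h
  · rw [hx, Real.sign_zero] at h; norm_num at h
  · exact hx

theorem stmt_5 (p1 p2 p3 p4 p5 : ℝ × ℝ)
    (hdist : List.Pairwise (· ≠ ·) [p1, p2, p3, p4, p5])
    (hgp : GenPos {p1, p2, p3, p4, p5})
    (h1 : chi p1 p2 p3 = 1) (h2 : chi p1 p2 p4 = 1) (h3 : chi p1 p2 p5 = 1)
    (h4 : chi p1 p3 p4 = 1) (h5 : chi p1 p4 p5 = 1) :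
    chi p1 p3 p5 = 1 := by
  have d1 := sign_one_pos h1
  have d2 := sign_one_pos h2
  have d3 := sign_one_pos h3
  have d4 := sign_one_pos h4
  have d5 := sign_one_pos h5
  have key : det2 p1 p2 p4 * det2 p1 p3 p5 =
      det2 p1 p2 p3 * det2 p1 p4 p5 + det2 p1 p2 p5 * det2 p1 p3 p4 := by
    unfold det2; ring
  have hpos : 0 < det2 p1 p3 p5 := by nlinarith
  exact Real.sign_of_pos hpos
end

section
/- Four distinct points a, b, c, d in the plane in general position are in convex position if and only if the sign pattern (χ(a,b,c), χ(b,c,d), χ(c,d,a), χ(d,a,b)) is one of the six patterns (+,+,+,+), (−,−,−,−), (+,+,−,−), (−,−,+,+), (−,+,+,−), (+,−,−,+). -/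
/-
Four points fail to be in convex position exactly when one of them lies in the triangle of the
other three, and `x` lies in the triangle `pqr` iff `det2 x q r`, `det2 p x r`, `det2 p q x` all
have the sign of `det2 p q r`. For the four cyclic triangles of `abcd` these determinants are
`±Dᵢ`, where `D₁ = det2 a b c`, `D₂ = det2 b c d`, `D₃ = det2 c d a`, `D₄ = det2 d a b`, so
non-convex position means that exactly one of the four signs differs from the other three. Of
the eight remaining patterns, the identity `D₁ + D₃ = D₂ + D₄` rules out the two alternating ones.
-/

lemma collinear_of_det2_eq_zero {a b c : ℝ × ℝ} (h : det2 a b c = 0) :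
    Collinear ℝ ({a, b, c} : Set (ℝ × ℝ)) := by
  rcases eq_or_ne b c with rfl | hbc
  · simp [collinear_pair]
  have hn : (c.1 - b.1) ^ 2 + (c.2 - b.2) ^ 2 ≠ 0 := by
    contrapose! hbc
    ext <;> nlinarith [sq_nonneg (c.1 - b.1), sq_nonneg (c.2 - b.2)]
  apply collinear_insert_of_mem_affineSpan_pair
  -- the parameter of the orthogonal projection of `a` onto the line `bc`, which is `a` itself
  convert AffineMap.lineMap_mem_affineSpan_pair (k := ℝ)
    (((a.1 - b.1) * (c.1 - b.1) + (a.2 - b.2) * (c.2 - b.2)) / ((c.1 - b.1) ^ 2 + (c.2 - b.2) ^ 2))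
    b c
  unfold det2 at h
  ext <;> simp only [AffineMap.lineMap_apply, vsub_eq_sub, vadd_eq_add,
    Prod.smul_fst, Prod.smul_snd, Prod.fst_sub, Prod.snd_sub, Prod.fst_add, Prod.snd_add, smul_eq_mul] <;>
    field_simp
  · linear_combination (b.2 - c.2) * h
  · linear_combination (c.1 - b.1) * h

lemma GenPos.det2_ne_zero {S : Set (ℝ × ℝ)} (hS : GenPos S) {a b c : ℝ × ℝ} (ha : a ∈ S)
    (hb : b ∈ S) (hc : c ∈ S) (hab : a ≠ b) (hac : a ≠ c) (hbc : b ≠ c) : det2 a b c ≠ 0 :=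
  fun h => hS a ha b hb c hc hab hac hbc (collinear_of_det2_eq_zero h)

lemma convex_setOf_det2_mul_nonneg (q r : ℝ × ℝ) (s : ℝ) :
    Convex ℝ {y | 0 ≤ det2 y q r * s} := by
  intro y hy z hz u v hu hv huv
  have hcomb : det2 (u • y + v • z) q r * s = u * (det2 y q r * s) + v * (det2 z q r * s) := by
    obtain rfl : u = 1 - v := by linarith
    simp only [det2, Prod.fst_add, Prod.snd_add, Prod.smul_fst, Prod.smul_snd, smul_eq_mul]
    ring
  rw [Set.mem_ofPred_eq, hcomb]
  exact add_nonneg (mul_nonneg hu hy) (mul_nonneg hv hz)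

lemma det2_mul_nonneg_of_mem_convexHull {p q r x : ℝ × ℝ} (hx : x ∈ convexHull ℝ {p, q, r}) :
    0 ≤ det2 x q r * det2 p q r := by
  refine convexHull_min ?_ (convex_setOf_det2_mul_nonneg q r (det2 p q r)) hx
  simp only [Set.insert_subset_iff, Set.singleton_subset_iff, Set.mem_ofPred_eq]
  exact ⟨mul_self_nonneg _, by simp [det2], by simp [det2]⟩

lemma mem_convexHull_triple_iff {p q r x : ℝ × ℝ} (hD : det2 p q r ≠ 0) :
    x ∈ convexHull ℝ {p, q, r} ↔
      0 ≤ det2 x q r * det2 p q r ∧ 0 ≤ det2 p x r * det2 p q r ∧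
        0 ≤ det2 p q x * det2 p q r := by
  constructor
  · intro hx
    have hx' : x ∈ convexHull ℝ {q, r, p} := by rwa [Set.pair_comm r p, Set.insert_comm q p]
    have hx'' : x ∈ convexHull ℝ {r, p, q} := by rwa [Set.insert_comm r p, Set.pair_comm r q]
    refine ⟨det2_mul_nonneg_of_mem_convexHull hx, ?_, ?_⟩
    · convert det2_mul_nonneg_of_mem_convexHull hx' using 1; unfold det2; ring
    · convert det2_mul_nonneg_of_mem_convexHull hx'' using 1; unfold det2; ring
  · rintro ⟨hp, hq, hr⟩
    set D := det2 p q r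
    have hD2 : 0 < D * D := mul_self_pos.2 hD
    have hsum : det2 x q r + det2 p x r + det2 p q x = D := by unfold D det2; ring
    -- `x` is the centre of mass of the vertices weighted by its barycentric determinants
    have hmass : Finset.univ.centerMass ![det2 x q r * D, det2 p x r * D, det2 p q x * D]
        ![p, q, r] = x := by
      simp only [Finset.centerMass, Fin.sum_univ_three, Matrix.cons_val_zero, Matrix.cons_val_one,
        Matrix.cons_val_two, Matrix.head_cons, Matrix.tail_cons, ← add_mul, hsum]
      ext <;>
        simp only [smul_add, Prod.fst_add, Prod.snd_add, Prod.smul_fst, Prod.smul_snd, smul_eq_mul] <;>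
        field_simp <;> unfold D det2 <;> ring
    rw [← hmass]
    apply Finset.centerMass_mem_convexHull
    · intro i _; fin_cases i <;> assumption
    · simp only [Fin.sum_univ_three, Matrix.cons_val_zero, Matrix.cons_val_one,
        Matrix.cons_val_two, Matrix.head_cons, Matrix.tail_cons, ← add_mul, hsum, hD2]
    · intro i _; fin_cases i <;> simp

lemma mem_convexHull_iff_det2 (a b c d : ℝ × ℝ) (h : det2 b c d ≠ 0) :
    a ∈ convexHull ℝ {b, c, d} ↔
      0 ≤ det2 c d a * det2 b c d ∧ 0 ≤ -det2 d a b * det2 b c d ∧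
        0 ≤ det2 a b c * det2 b c d := by
  rw [mem_convexHull_triple_iff h, show det2 a c d = det2 c d a by unfold det2; ring,
    show det2 b a d = -det2 d a b by unfold det2; ring,
    show det2 b c a = det2 a b c by unfold det2; ring]

-- Both sides are twice the signed area of the quadrilateral `abcd`.
lemma det2_add_det2_eq (a b c d : ℝ × ℝ) :
    det2 a b c + det2 c d a = det2 b c d + det2 d a b := by
  unfold det2; ring

lemma convexPos_four_iff {a b c d : ℝ × ℝ} (hab : a ≠ b) (hac : a ≠ c) (had : a ≠ d)
    (hbc : b ≠ c) (hbd : b ≠ d) (hcd : c ≠ d) :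
    ConvexPos {a, b, c, d} ↔
      a ∉ convexHull ℝ {b, c, d} ∧ b ∉ convexHull ℝ {c, d, a} ∧
        c ∉ convexHull ℝ {d, a, b} ∧ d ∉ convexHull ℝ {a, b, c} := by
  have hsa : ({a, b, c, d} : Set (ℝ × ℝ)) \ {a} = {b, c, d} := by
    ext; grind
  have hsb : ({a, b, c, d} : Set (ℝ × ℝ)) \ {b} = {c, d, a} := by
    ext; grind
  have hsc : ({a, b, c, d} : Set (ℝ × ℝ)) \ {c} = {d, a, b} := by
    ext; grind
  have hsd : ({a, b, c, d} : Set (ℝ × ℝ)) \ {d} = {a, b, c} := by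
    ext; grind
  simp only [ConvexPos, Set.forall_mem_insert, Set.mem_singleton_iff, forall_eq, hsa, hsb, hsc, hsd]

lemma mul_nonneg_iff_sign_eq {x y : ℝ} (hx : x ≠ 0) (hy : y ≠ 0) :
    0 ≤ x * y ↔ Real.sign x = Real.sign y := by
  rcases hx.lt_or_gt with hx | hx <;> rcases hy.lt_or_gt with hy | hy <;>
    simp only [Real.sign_of_neg, Real.sign_of_pos, hx, hy] <;> norm_num <;> nlinarith

lemma convex_position_signs {D₁ D₂ D₃ D₄ : ℝ} (h₁ : D₁ ≠ 0) (h₂ : D₂ ≠ 0) (h₃ : D₃ ≠ 0)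
    (h₄ : D₄ ≠ 0) (hsum : D₁ + D₃ = D₂ + D₄) :
    (¬ (0 ≤ D₃ * D₂ ∧ 0 ≤ -D₄ * D₂ ∧ 0 ≤ D₁ * D₂) ∧ ¬ (0 ≤ D₄ * D₃ ∧ 0 ≤ -D₁ * D₃ ∧ 0 ≤ D₂ * D₃) ∧
      ¬ (0 ≤ D₁ * D₄ ∧ 0 ≤ -D₂ * D₄ ∧ 0 ≤ D₃ * D₄) ∧
      ¬ (0 ≤ D₂ * D₁ ∧ 0 ≤ -D₃ * D₁ ∧ 0 ≤ D₄ * D₁)) ↔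
    (Real.sign D₁, Real.sign D₂, Real.sign D₃, Real.sign D₄) ∈
      ({(1, 1, 1, 1), (-1, -1, -1, -1), (1, 1, -1, -1), (-1, -1, 1, 1),
        (-1, 1, 1, -1), (1, -1, -1, 1)} : Set (ℝ × ℝ × ℝ × ℝ)) := by
  simp only [mul_nonneg_iff_sign_eq, neg_ne_zero, h₁, h₂, h₃, h₄, ne_eq, not_false_eq_true,
    Real.sign_neg]
  rcases h₁.lt_or_gt with e₁ | e₁ <;> rcases h₂.lt_or_gt with e₂ | e₂ <;>
    rcases h₃.lt_or_gt with e₃ | e₃ <;> rcases h₄.lt_or_gt with e₄ | e₄ <;>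
    simp only [Real.sign_of_neg, Real.sign_of_pos, e₁, e₂, e₃, e₄] <;> norm_num [Prod.ext_iff] <;>
    -- `hsum` excludes the alternating patterns `(+, -, +, -)` and `(-, +, -, +)`
    linarith

theorem stmt_6 (a b c d : ℝ × ℝ)
    (hdist : List.Pairwise (· ≠ ·) [a, b, c, d])
    (hgp : GenPos {a, b, c, d}) :
    ConvexPos {a, b, c, d} ↔
      (chi a b c, chi b c d, chi c d a, chi d a b) ∈
        ({(1, 1, 1, 1), (-1, -1, -1, -1), (1, 1, -1, -1), (-1, -1, 1, 1),
          (-1, 1, 1, -1), (1, -1, -1, 1)} : Set (ℝ × ℝ × ℝ × ℝ)) := by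
  obtain ⟨⟨hab, hac, had⟩, ⟨hbc, hbd⟩, hcd⟩ : (a ≠ b ∧ a ≠ c ∧ a ≠ d) ∧ (b ≠ c ∧ b ≠ d) ∧ c ≠ d := by
    simpa using hdist
  have h₁ := hgp.det2_ne_zero (by simp) (by simp) (by simp) hab hac hbc
  have h₂ := hgp.det2_ne_zero (by simp) (by simp) (by simp) hbc hbd hcd
  have h₃ := hgp.det2_ne_zero (by simp) (by simp) (by simp) hcd hac.symm had.symm
  have h₄ := hgp.det2_ne_zero (by simp) (by simp) (by simp) had.symm hbd.symm hab
  rw [convexPos_four_iff hab hac had hbc hbd hcd, mem_convexHull_iff_det2 a b c d h₂,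
    mem_convexHull_iff_det2 b c d a h₃, mem_convexHull_iff_det2 c d a b h₄,
    mem_convexHull_iff_det2 d a b c h₁]
  exact convex_position_signs h₁ h₂ h₃ h₄ (det2_add_det2_eq a b c d)
end

section
/- Let a, b, c, d be four distinct points in the plane in general position. Then exactly one of the following holds: (i) the four points are in convex position, or (ii) exactly one of the four points lies in the interior of the triangle formed by the other three. -/
open Set Module

theorem convexHull_sdiff_singleton_eq {𝕜 E : Type*} [Semiring 𝕜] [PartialOrder 𝕜]
    [AddCommMonoid E] [Module 𝕜 E] {s : Set E} {p : E} (hp : p ∈ convexHull 𝕜 (s \ {p})) :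
    convexHull 𝕜 (s \ {p}) = convexHull 𝕜 s := by
  refine (convexHull_mono sdiff_subset).antisymm
    (convexHull_min (fun x hx => ?_) (convex_convexHull 𝕜 _))
  by_cases hxp : x = p
  · exact hxp ▸ hp
  · exact subset_convexHull 𝕜 _ ⟨hx, hxp⟩

namespace AffineBasis

section Collinear

variable {k V P : Type*} [DivisionRing k] [AddCommGroup V] [Module k V] [AddTorsor V P]

theorem collinear_of_coord_eq_zero (b : AffineBasis (Fin 3) k P) {x : P} {i j l : Fin 3}
    (hij : i ≠ j) (hil : i ≠ l) (hjl : j ≠ l) (hx : b.coord i x = 0) :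
    Collinear k {x, b j, b l} := by
  have hmem : x ∈ affineSpan k (b '' {j, l}) := by
    rw [← b.affineCombination_coord_eq_self x]
    refine affineCombination_mem_affineSpan_image (b.sum_coord_apply_eq_one x)
      (fun m _ hm => ?_) b
    obtain rfl : m = i := by simp only [mem_insert_iff, mem_singleton_iff] at hm; omega
    exact hx
  rw [image_pair] at hmem
  exact collinear_insert_of_mem_affineSpan_pair hmem

end Collinear

variable {ι E : Type*} [Finite ι] [NormedAddCommGroup E] [NormedSpace ℝ E]

theorem mem_interior_convexHull_of_coord_ne_zero (b : AffineBasis ι ℝ E) {x : E}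
    (hx : x ∈ convexHull ℝ (range b)) (h : ∀ i, b.coord i x ≠ 0) :
    x ∈ interior (convexHull ℝ (range b)) := by
  rw [b.convexHull_eq_nonneg_coord] at hx
  rw [b.interior_convexHull]
  exact fun i => (hx i).lt_of_ne (h i).symm

theorem apply_notMem_interior_convexHull [Nontrivial ι] (b : AffineBasis ι ℝ E) (i : ι) :
    b i ∉ interior (convexHull ℝ (range b)) := by
  rw [b.interior_convexHull]
  obtain ⟨j, hj⟩ := exists_ne i
  intro h
  simpa [b.coord_apply_ne hj] using h j

end AffineBasis

section Triangle

variable {E : Type*} [NormedAddCommGroup E] [NormedSpace ℝ E] {p q r x : E}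

noncomputable def affineBasisOfNotCollinear (hE : finrank ℝ E = 2)
    (h : ¬ Collinear ℝ ({p, q, r} : Set E)) : AffineBasis (Fin 3) ℝ E :=
  have : FiniteDimensional ℝ E := Module.finite_of_finrank_eq_succ hE
  have hind : AffineIndependent ℝ ![p, q, r] := affineIndependent_iff_not_collinear_set.2 h
  ⟨![p, q, r], hind, by rw [hind.affineSpan_eq_top_iff_card_eq_finrank_add_one]; simp [hE]⟩

@[simp]
theorem coe_affineBasisOfNotCollinear (hE : finrank ℝ E = 2)
    (h : ¬ Collinear ℝ ({p, q, r} : Set E)) : ⇑(affineBasisOfNotCollinear hE h) = ![p, q, r] :=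
  rfl

theorem range_affineBasisOfNotCollinear (hE : finrank ℝ E = 2)
    (h : ¬ Collinear ℝ ({p, q, r} : Set E)) :
    range (affineBasisOfNotCollinear hE h) = {p, q, r} := by
  rw [coe_affineBasisOfNotCollinear, Matrix.range_cons, Matrix.range_cons_cons_empty, singleton_union]

theorem mem_interior_convexHull_triangle (hE : finrank ℝ E = 2)
    (h : ¬ Collinear ℝ ({p, q, r} : Set E)) (hx : x ∈ convexHull ℝ {p, q, r})
    (hp : ¬ Collinear ℝ ({x, q, r} : Set E)) (hq : ¬ Collinear ℝ ({x, p, r} : Set E))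
    (hr : ¬ Collinear ℝ ({x, p, q} : Set E)) : x ∈ interior (convexHull ℝ {p, q, r}) := by
  set b := affineBasisOfNotCollinear hE h
  have h0 : b.coord 0 x ≠ 0 := fun h0 => hp <| by
    simpa [b] using
      b.collinear_of_coord_eq_zero (j := 1) (l := 2) (by decide) (by decide) (by decide) h0
  have h1 : b.coord 1 x ≠ 0 := fun h1 => hq <| by
    simpa [b] using
      b.collinear_of_coord_eq_zero (j := 0) (l := 2) (by decide) (by decide) (by decide) h1
  have h2 : b.coord 2 x ≠ 0 := fun h2 => hr <| by
    simpa [b] using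
      b.collinear_of_coord_eq_zero (j := 0) (l := 1) (by decide) (by decide) (by decide) h2
  rw [← range_affineBasisOfNotCollinear hE h] at hx ⊢
  exact b.mem_interior_convexHull_of_coord_ne_zero hx
    (Fin.forall_fin_succ.2 ⟨h0, Fin.forall_fin_two.2 ⟨h1, h2⟩⟩)

theorem notMem_interior_convexHull_triangle (hE : finrank ℝ E = 2)
    (h : ¬ Collinear ℝ ({p, q, r} : Set E)) (hx : x ∈ ({p, q, r} : Set E)) :
    x ∉ interior (convexHull ℝ {p, q, r}) := by
  rw [← range_affineBasisOfNotCollinear hE h] at hx ⊢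
  obtain ⟨i, rfl⟩ := hx
  exact AffineBasis.apply_notMem_interior_convexHull _ i

end Triangle

namespace GenPos

variable {S : Set (ℝ × ℝ)} {p q : ℝ × ℝ}

theorem exists_sdiff_singleton_eq_triangle (hgp : GenPos S) (hS : S.ncard = 4) (hp : p ∈ S) :
    ∃ q r s, S \ {p} = {q, r, s} ∧ ¬ Collinear ℝ ({q, r, s} : Set (ℝ × ℝ)) ∧
      ¬ Collinear ℝ ({p, r, s} : Set (ℝ × ℝ)) ∧ ¬ Collinear ℝ ({p, q, s} : Set (ℝ × ℝ)) ∧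
      ¬ Collinear ℝ ({p, q, r} : Set (ℝ × ℝ)) := by
  have h3 : (S \ {p}).ncard = 3 := by rw [ncard_sdiff_singleton_of_mem hp, hS]
  obtain ⟨q, r, s, hqr, hqs, hrs, hqrs⟩ := ncard_eq_three.1 h3
  have hq : q ∈ S \ {p} := by simp [hqrs]
  have hr : r ∈ S \ {p} := by simp [hqrs]
  have hs : s ∈ S \ {p} := by simp [hqrs]
  simp only [mem_sdiff, mem_singleton_iff] at hq hr hs
  exact ⟨q, r, s, hqrs, hgp q hq.1 r hr.1 s hs.1 hqr hqs hrs,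
    hgp p hp r hr.1 s hs.1 (Ne.symm hr.2) (Ne.symm hs.2) hrs,
    hgp p hp q hq.1 s hs.1 (Ne.symm hq.2) (Ne.symm hs.2) hqs,
    hgp p hp q hq.1 r hr.1 (Ne.symm hq.2) (Ne.symm hr.2) hqr⟩

theorem mem_interior_convexHull_sdiff (hgp : GenPos S) (hS : S.ncard = 4) (hp : p ∈ S)
    (h : p ∈ convexHull ℝ (S \ {p})) : p ∈ interior (convexHull ℝ (S \ {p})) := by
  obtain ⟨q, r, s, hqrs, hT, hpq, hpr, hps⟩ := hgp.exists_sdiff_singleton_eq_triangle hS hp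
  rw [hqrs] at h ⊢
  exact mem_interior_convexHull_triangle (by simp) hT h hpq hpr hps

theorem eq_of_mem_interior_convexHull_sdiff (hgp : GenPos S) (hS : S.ncard = 4) (hp : p ∈ S)
    (hq : q ∈ S) (hpI : p ∈ interior (convexHull ℝ (S \ {p})))
    (hqI : q ∈ interior (convexHull ℝ (S \ {q}))) : q = p := by
  by_contra hne
  obtain ⟨q', r, s, hqrs, hT, -⟩ := hgp.exists_sdiff_singleton_eq_triangle hS hp
  have hqT : q ∈ S \ {p} := ⟨hq, hne⟩
  have hqI' : q ∈ interior (convexHull ℝ (S \ {p})) := by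
    refine interior_mono ?_ hqI
    rw [convexHull_sdiff_singleton_eq (interior_subset hpI)]
    exact convexHull_mono sdiff_subset
  rw [hqrs] at hqT hqI'
  exact notMem_interior_convexHull_triangle (by simp) hT hqT hqI'

theorem convexPos_iff (hgp : GenPos S) (hS : S.ncard = 4) :
    ConvexPos S ↔ ¬ ∃ p, p ∈ S ∧ p ∈ interior (convexHull ℝ (S \ {p})) := by
  simp only [ConvexPos, not_exists, not_and]
  exact forall₂_congr fun p hp =>
    not_congr ⟨hgp.mem_interior_convexHull_sdiff hS hp, fun h => interior_subset h⟩

end GenPos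

theorem stmt_19 (a b c d : ℝ × ℝ)
    (hdist : List.Pairwise (· ≠ ·) [a, b, c, d])
    (hgp : GenPos {a, b, c, d}) :
    Xor' (ConvexPos {a, b, c, d})
      (∃! p : ℝ × ℝ, p ∈ ({a, b, c, d} : Set (ℝ × ℝ)) ∧
        p ∈ interior (convexHull ℝ (({a, b, c, d} : Set (ℝ × ℝ)) \ {p}))) := by
  set S : Set (ℝ × ℝ) := {a, b, c, d}
  have hS : S.ncard = 4 := by
    rw [show 4 = [a, b, c, d].length from rfl, ← List.toFinset_card_of_nodup hdist,
      ← ncard_coe_finset]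
    simp [S]
  rw [hgp.convexPos_iff hS]
  refine xor_not_left.2 ⟨fun ⟨p, hp⟩ => ⟨p, hp, fun q hq => ?_⟩, ExistsUnique.exists⟩
  exact hgp.eq_of_mem_interior_convexHull_sdiff hS hp.1 hq.1 hp.2 hq.2
end
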